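/- There exists a constant C > 0 such that for all t ∈ (0,∞): ∫_0^{e^t − 1} |K0(r,t)| dr ≤ C. In particular, the kernel K0(·,t) has an integrable singularity at r = e^t − 1 and its L¹-norm on (0, e^t − 1) is bounded uniformly in t. -/

import Mathlib

open MeasureTheory Real intervalIntegral

/-- Rising factorial (Pochhammer symbol) `(q)_n = q (q+1) ⋯ (q+n−1)`. -/
noncomputable def risingFactorial (q : ℝ) : ℕ → ℝ
  | 0 => 1
  | n + 1 => risingFactorial q n * (q + (n : ℝ))

/-- The Gauss hypergeometric function `F(a,b;c;x)` defined by its power series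
`∑ ((a)_n (b)_n / ((c)_n n!)) x^n`. -/
noncomputable def hyperF (a b c x : ℝ) : ℝ :=
  ∑' n : ℕ, (risingFactorial a n * risingFactorial b n) /
    (risingFactorial c n * (Nat.factorial n : ℝ)) * x ^ n

/-- The kernel `K1(z,t) = ((1+e^t)²−z²)^{−1/2} F(1/2,1/2;1;((e^t−1)²−z²)/((e^t+1)²−z²))`. -/
noncomputable def K1 (z t : ℝ) : ℝ :=
  ((1 + Real.exp t) ^ 2 - z ^ 2) ^ (-(1 : ℝ) / 2) *
    hyperF (1 / 2) (1 / 2) 1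
      (((Real.exp t - 1) ^ 2 - z ^ 2) / ((Real.exp t + 1) ^ 2 - z ^ 2))

/-- The kernel `K0(z,t)`. -/
noncomputable def K0 (z t : ℝ) : ℝ :=
  -(1 / (2 * ((Real.exp t - 1) ^ 2 - z ^ 2) * Real.sqrt ((Real.exp t + 1) ^ 2 - z ^ 2))) *
    ((1 - Real.exp (2 * t) + z ^ 2) *
        hyperF (-(1 / 2)) (1 / 2) 1
          (((Real.exp t - 1) ^ 2 - z ^ 2) / ((Real.exp t + 1) ^ 2 - z ^ 2))
      + 2 * (Real.exp t - 1) *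
        hyperF (1 / 2) (1 / 2) 1
          (((Real.exp t - 1) ^ 2 - z ^ 2) / ((Real.exp t + 1) ^ 2 - z ^ 2)))

/-!
Write `E = e^t`, `S = (E-1)^2 - z^2`, `D = (E+1)^2 - z^2`, so that `ζ = S/D` and
`1 - ζ = 4E/D`, and abbreviate `F± = F(±1/2, 1/2; 1; ζ)`. With `p_n = (1/2)_n / n!`, the
Wallis-type bound `p_n^2 (2n+1) ≤ 1` shows that `F- = 1 - ∑ p_n p_{n+1} ζ^{n+1} / (2(n+1))`
lies in `[0,1]` (the tail is at most `π^2/24`), and that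
`0 ≤ F+ - F- = ∑ p_n p_{n+1} ζ^{n+1} ≤ ζ/(1-ζ) = S/(4E)`. The bracket in `K0` equals
`-S F- + 2(E-1)(F+ - F-)`, so it is at most `S` in absolute value and `|K0(z,t)| ≤ 1/(2√D)`.
Finally `∫_0^{E-1} dz/√((E+1)^2 - z^2) = arcsin((E-1)/(E+1)) ≤ π/2`.
-/

open Set

lemma risingFactorial_one (n : ℕ) : risingFactorial 1 n = n.factorial := by
  induction n with
  | zero => simp [risingFactorial]
  | succ n ih => simp only [risingFactorial, ih, Nat.factorial_succ]; push_cast; ring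

lemma risingFactorial_succ_eq_mul_add_one (q : ℝ) (n : ℕ) :
    risingFactorial q (n + 1) = q * risingFactorial (q + 1) n := by
  induction n with
  | zero => simp [risingFactorial]
  | succ n ih => rw [risingFactorial, ih, risingFactorial]; push_cast; ring

noncomputable def halfRatio (n : ℕ) : ℝ := risingFactorial (1 / 2) n / n.factorial

lemma halfRatio_zero : halfRatio 0 = 1 := by simp [halfRatio, risingFactorial]

lemma halfRatio_succ (n : ℕ) :
    halfRatio (n + 1) = halfRatio n * (2 * n + 1) / (2 * (n + 1)) := by
  simp only [halfRatio, risingFactorial, Nat.factorial_succ]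
  push_cast
  field_simp
  ring

lemma halfRatio_pos (n : ℕ) : 0 < halfRatio n := by
  induction n with
  | zero => simp [halfRatio_zero]
  | succ n ih => rw [halfRatio_succ]; positivity

lemma halfRatio_succ_le (n : ℕ) : halfRatio (n + 1) ≤ halfRatio n := by
  rw [halfRatio_succ, div_le_iff₀ (by positivity)]
  nlinarith [halfRatio_pos n]

lemma halfRatio_le_one (n : ℕ) : halfRatio n ≤ 1 := by
  induction n with
  | zero => simp [halfRatio_zero]
  | succ n ih => exact (halfRatio_succ_le n).trans ih

-- `(2n+1)(2n+3) ≤ (2n+2)^2` makes `halfRatio n ^ 2 * (2n+1)` decreasing in `n`.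
lemma halfRatio_sq_mul_le_one (n : ℕ) : halfRatio n ^ 2 * (2 * n + 1) ≤ 1 := by
  induction n with
  | zero => simp [halfRatio_zero]
  | succ n ih =>
    have hstep : ((2 * n + 1) * (2 * n + 3) : ℝ) ≤ (2 * (n + 1)) ^ 2 := by nlinarith
    rw [halfRatio_succ, div_pow, div_mul_eq_mul_div, div_le_one (by positivity)]
    push_cast
    calc (halfRatio n * (2 * n + 1)) ^ 2 * (2 * ((n : ℝ) + 1) + 1)
        = halfRatio n ^ 2 * (2 * n + 1) * ((2 * n + 1) * (2 * n + 3)) := by ring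
      _ ≤ 1 * (2 * ((n : ℝ) + 1)) ^ 2 := by gcongr
      _ = (2 * ((n : ℝ) + 1)) ^ 2 := one_mul _

lemma halfRatio_mul_halfRatio_succ_le (n : ℕ) :
    halfRatio n * halfRatio (n + 1) ≤ 1 / (2 * (n + 1)) := by
  rw [halfRatio_succ, le_div_iff₀ (by positivity)]
  calc halfRatio n * (halfRatio n * (2 * n + 1) / (2 * (n + 1))) * (2 * (n + 1))
      = halfRatio n ^ 2 * (2 * n + 1) := by field_simp
    _ ≤ 1 := halfRatio_sq_mul_le_one n

noncomputable def hyperCoeff (a b c : ℝ) (n : ℕ) : ℝ :=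
  risingFactorial a n * risingFactorial b n / (risingFactorial c n * n.factorial)

lemma hyperF_eq_tsum (a b c x : ℝ) : hyperF a b c x = ∑' n, hyperCoeff a b c n * x ^ n := rfl

lemma hyperCoeff_half_half_one (n : ℕ) : hyperCoeff (1 / 2) (1 / 2) 1 n = halfRatio n ^ 2 := by
  rw [hyperCoeff, halfRatio, risingFactorial_one]; ring

lemma hyperCoeff_neg_half_half_one_zero : hyperCoeff (-(1 / 2)) (1 / 2) 1 0 = 1 := by
  simp [hyperCoeff, risingFactorial]

lemma hyperCoeff_neg_half_half_one_succ (n : ℕ) :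
    hyperCoeff (-(1 / 2)) (1 / 2) 1 (n + 1) =
      -(halfRatio n * halfRatio (n + 1) / (2 * (n + 1))) := by
  rw [hyperCoeff, risingFactorial_one, risingFactorial_succ_eq_mul_add_one, halfRatio, halfRatio,
    Nat.factorial_succ]
  norm_num
  field_simp

lemma hasSum_inv_nat_add_one_sq : HasSum (fun n : ℕ => 1 / ((n : ℝ) + 1) ^ 2) (π ^ 2 / 6) := by
  simpa using (hasSum_nat_add_iff' 1).2 hasSum_zeta_two

lemma halfRatio_mul_halfRatio_succ_div_nonneg (n : ℕ) :
    0 ≤ halfRatio n * halfRatio (n + 1) / (2 * (n + 1)) :=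
  div_nonneg (mul_nonneg (halfRatio_pos n).le (halfRatio_pos _).le) (by positivity)

lemma halfRatio_mul_halfRatio_succ_div_le (n : ℕ) :
    halfRatio n * halfRatio (n + 1) / (2 * (n + 1)) ≤ 1 / 4 * (1 / ((n : ℝ) + 1) ^ 2) :=
  calc halfRatio n * halfRatio (n + 1) / (2 * (n + 1))
      ≤ 1 / (2 * (n + 1)) / (2 * (n + 1)) := by
        gcongr; exact halfRatio_mul_halfRatio_succ_le n
    _ = 1 / 4 * (1 / ((n : ℝ) + 1) ^ 2) := by field_simp; ring

lemma hasSum_one_sub_hyperF_neg_half {x : ℝ} (hx : |x| ≤ 1) :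
    HasSum (fun n : ℕ => halfRatio n * halfRatio (n + 1) / (2 * (n + 1)) * x ^ (n + 1))
      (1 - hyperF (-(1 / 2)) (1 / 2) 1 x) := by
  set g := fun n : ℕ => halfRatio n * halfRatio (n + 1) / (2 * (n + 1)) * x ^ (n + 1)
  have hg : Summable g := by
    refine (hasSum_inv_nat_add_one_sq.summable.mul_left (1 / 4)).of_norm_bounded fun n => ?_
    have hpos := halfRatio_mul_halfRatio_succ_div_nonneg n
    rw [norm_mul, norm_pow, Real.norm_of_nonneg hpos, Real.norm_eq_abs]
    exact (mul_le_of_le_one_right hpos (pow_le_one₀ (abs_nonneg x) hx)).trans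
      (halfRatio_mul_halfRatio_succ_div_le n)
  have htail : HasSum (fun n => hyperCoeff (-(1 / 2)) (1 / 2) 1 (n + 1) * x ^ (n + 1))
      (-∑' n, g n) := by
    refine hg.hasSum.neg.congr_fun fun n => ?_
    rw [hyperCoeff_neg_half_half_one_succ, neg_mul]
  have h := HasSum.zero_add (f := fun n => hyperCoeff (-(1 / 2)) (1 / 2) 1 n * x ^ n) htail
  rw [hyperF_eq_tsum, h.tsum_eq, hyperCoeff_neg_half_half_one_zero, one_mul, pow_zero,
    sub_add_cancel_left, neg_neg]
  exact hg.hasSum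

lemma hyperF_neg_half_mem_Icc {x : ℝ} (hx0 : 0 ≤ x) (hx1 : x ≤ 1) :
    hyperF (-(1 / 2)) (1 / 2) 1 x ∈ Icc 0 1 := by
  have hsum := hasSum_one_sub_hyperF_neg_half (abs_le.2 ⟨by linarith, hx1⟩)
  have hle := hasSum_le (fun n => (mul_le_of_le_one_right
      (halfRatio_mul_halfRatio_succ_div_nonneg n) (pow_le_one₀ hx0 hx1)).trans
      (halfRatio_mul_halfRatio_succ_div_le n)) hsum (hasSum_inv_nat_add_one_sq.mul_left (1 / 4))
  have hnonneg := hsum.nonneg fun n =>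
    mul_nonneg (halfRatio_mul_halfRatio_succ_div_nonneg n) (pow_nonneg hx0 _)
  have hpi : π ^ 2 ≤ 4 ^ 2 := by gcongr; exact pi_le_four
  constructor <;> linarith

lemma halfRatio_succ_sq_add (n : ℕ) :
    halfRatio (n + 1) ^ 2 + halfRatio n * halfRatio (n + 1) / (2 * (n + 1)) =
      halfRatio n * halfRatio (n + 1) := by
  rw [halfRatio_succ]; field_simp; ring

lemma hasSum_hyperF_half_sub_hyperF_neg_half {x : ℝ} (hx : |x| < 1) :
    HasSum (fun n : ℕ => halfRatio n * halfRatio (n + 1) * x ^ (n + 1))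
      (hyperF (1 / 2) (1 / 2) 1 x - hyperF (-(1 / 2)) (1 / 2) 1 x) := by
  have hplus : HasSum (fun n => hyperCoeff (1 / 2) (1 / 2) 1 n * x ^ n)
      (hyperF (1 / 2) (1 / 2) 1 x) := by
    refine (Summable.of_norm_bounded (summable_geometric_of_lt_one (abs_nonneg x) hx)
      fun n => ?_).hasSum
    rw [hyperCoeff_half_half_one, norm_mul, norm_pow, Real.norm_eq_abs, Real.norm_eq_abs, abs_pow,
      abs_of_pos (halfRatio_pos n)]
    exact mul_le_of_le_one_left (by positivity)
      (pow_le_one₀ (halfRatio_pos n).le (halfRatio_le_one n))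
  have hplus_tail := (hasSum_nat_add_iff' 1).2 hplus
  simp only [Finset.range_one, Finset.sum_singleton, hyperCoeff_half_half_one,
    halfRatio_zero] at hplus_tail
  have h := hplus_tail.add (hasSum_one_sub_hyperF_neg_half hx.le)
  rw [one_pow, pow_zero, mul_one, sub_add_sub_cancel] at h
  exact h.congr_fun fun n => by rw [← add_mul, halfRatio_succ_sq_add]

lemma hyperF_half_sub_hyperF_neg_half_mem_Icc {x : ℝ} (hx0 : 0 ≤ x) (hx1 : x < 1) :
    hyperF (1 / 2) (1 / 2) 1 x - hyperF (-(1 / 2)) (1 / 2) 1 x ∈ Icc 0 (x / (1 - x)) := by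
  have hsum := hasSum_hyperF_half_sub_hyperF_neg_half (abs_lt.2 ⟨by linarith, hx1⟩)
  have hgeom : HasSum (fun n : ℕ => x ^ (n + 1)) (x / (1 - x)) := by
    simpa only [pow_succ', div_eq_mul_inv] using (hasSum_geometric_of_lt_one hx0 hx1).mul_left x
  have hcoeff (n : ℕ) : 0 ≤ halfRatio n * halfRatio (n + 1) :=
    mul_nonneg (halfRatio_pos n).le (halfRatio_pos _).le
  refine ⟨hsum.nonneg fun n => mul_nonneg (hcoeff n) (pow_nonneg hx0 _),
    hasSum_le (fun n => ?_) hsum hgeom⟩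
  exact mul_le_of_le_one_left (pow_nonneg hx0 _)
    (mul_le_one₀ (halfRatio_le_one n) (halfRatio_pos _).le (halfRatio_le_one _))

lemma abs_K0_le {t z : ℝ} (ht : 0 < t) (hz0 : 0 ≤ z) (hz : z ≤ exp t - 1) :
    |K0 z t| ≤ 1 / (2 * √((exp t + 1) ^ 2 - z ^ 2)) := by
  have hE : 1 < exp t := one_lt_exp_iff.2 ht
  rw [K0, show exp (2 * t) = exp t ^ 2 by rw [sq, ← exp_add, two_mul]]
  set E := exp t
  set S := (E - 1) ^ 2 - z ^ 2 with hS_def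
  set D := (E + 1) ^ 2 - z ^ 2 with hD_def
  have hD : 0 < D := by nlinarith
  have hS : 0 ≤ S := by nlinarith
  have hζ0 : 0 ≤ S / D := by positivity
  have hζ1 : S / D < 1 := by rw [div_lt_one hD]; nlinarith
  have hζ_div : S / D / (1 - S / D) = S / (4 * E) := by
    rw [show 1 - S / D = 4 * E / D by field_simp; rw [hS_def, hD_def]; ring]
    field_simp
  obtain ⟨hFm0, hFm1⟩ := hyperF_neg_half_mem_Icc hζ0 hζ1.le
  obtain ⟨hΔ0, hΔ⟩ := hyperF_half_sub_hyperF_neg_half_mem_Icc hζ0 hζ1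
  rw [hζ_div] at hΔ
  generalize hyperF (-(1 / 2)) (1 / 2) 1 (S / D) = Fm at *
  generalize hyperF (1 / 2) (1 / 2) 1 (S / D) = Fp at *
  rcases hS.eq_or_lt with hS0 | hSpos
  · -- at `z = e^t - 1` the prefactor is `1 / 0 = 0`
    rw [← hS0]; simp
  have hnum : |(1 - E ^ 2 + z ^ 2) * Fm + 2 * (E - 1) * Fp| ≤ S := by
    have hsplit : (1 - E ^ 2 + z ^ 2) * Fm + 2 * (E - 1) * Fp =
        -(S * Fm) + 2 * (E - 1) * (Fp - Fm) := by
      rw [hS_def]; ring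
    have hSFm : S * Fm ≤ S := mul_le_of_le_one_right hS hFm1
    have hcorr : 2 * (E - 1) * (Fp - Fm) ≤ S := by
      calc 2 * (E - 1) * (Fp - Fm) ≤ 2 * (E - 1) * (S / (4 * E)) := by gcongr
        _ ≤ S := by
          rw [mul_div, div_le_iff₀ (by positivity)]; nlinarith
    rw [hsplit, abs_le]
    constructor <;> nlinarith [mul_nonneg hS hFm0, mul_nonneg (by linarith : 0 ≤ E - 1) hΔ0]
  rw [abs_mul, abs_neg, abs_of_pos (by positivity)]
  calc 1 / (2 * S * √D) * |(1 - E ^ 2 + z ^ 2) * Fm + 2 * (E - 1) * Fp|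
      ≤ 1 / (2 * S * √D) * S := by gcongr
    _ = 1 / (2 * √D) := by field_simp

lemma intervalIntegral_mono_of_nonneg {μ : Measure ℝ} {f g : ℝ → ℝ} {a b : ℝ}
    (hab : a ≤ b) (hf : ∀ x ∈ Ioc a b, 0 ≤ f x) (hg : IntervalIntegrable g μ a b)
    (hfg : ∀ x ∈ Ioc a b, f x ≤ g x) :
    ∫ x in a..b, f x ∂μ ≤ ∫ x in a..b, g x ∂μ := by
  rw [integral_of_le hab, integral_of_le hab]
  exact integral_mono_of_nonneg (ae_restrict_of_forall_mem measurableSet_Ioc hf) hg.1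
    (ae_restrict_of_forall_mem measurableSet_Ioc hfg)

lemma sq_sub_sq_pos_of_abs_lt {R z : ℝ} (hz : |z| < R) : 0 < R ^ 2 - z ^ 2 := by
  have := sq_lt_sq' (abs_lt.1 hz).1 (abs_lt.1 hz).2
  linarith

lemma hasDerivAt_arcsin_div {R z : ℝ} (hz : |z| < R) :
    HasDerivAt (fun z => arcsin (z / R)) (1 / √(R ^ 2 - z ^ 2)) z := by
  have hR : 0 < R := (abs_nonneg z).trans_lt hz
  have hzR : |z / R| < 1 := by rwa [abs_div, abs_of_pos hR, div_lt_one hR]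
  have hsqrt : √(R ^ 2 - z ^ 2) = R * √(1 - (z / R) ^ 2) := by
    rw [show R ^ 2 - z ^ 2 = R ^ 2 * (1 - (z / R) ^ 2) by field_simp, sqrt_mul (sq_nonneg R),
      sqrt_sq hR.le]
  have h := (hasDerivAt_arcsin (abs_lt.1 hzR).1.ne' (abs_lt.1 hzR).2.ne).comp z
    ((hasDerivAt_id z).div_const R)
  refine h.congr_deriv ?_
  rw [hsqrt, one_div_mul_one_div, mul_comm]

lemma abs_lt_of_mem_uIcc_zero {R a z : ℝ} (ha : |a| < R) (hz : z ∈ uIcc 0 a) : |z| < R := by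
  simpa using (abs_sub_left_of_mem_uIcc hz).trans_lt (by simpa using ha)

lemma intervalIntegrable_one_div_sqrt_sq_sub_sq {R a : ℝ} (ha : |a| < R) :
    IntervalIntegrable (fun z => 1 / √(R ^ 2 - z ^ 2)) volume 0 a := by
  refine ContinuousOn.intervalIntegrable (ContinuousOn.div continuousOn_const (by fun_prop) ?_)
  intro z hz
  exact (sqrt_pos.2 (sq_sub_sq_pos_of_abs_lt (abs_lt_of_mem_uIcc_zero ha hz))).ne'

lemma integral_one_div_sqrt_sq_sub_sq {R a : ℝ} (ha : |a| < R) :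
    ∫ z in (0 : ℝ)..a, 1 / √(R ^ 2 - z ^ 2) = arcsin (a / R) := by
  rw [integral_eq_sub_of_hasDerivAt
    (fun z hz => hasDerivAt_arcsin_div (abs_lt_of_mem_uIcc_zero ha hz))
    (intervalIntegrable_one_div_sqrt_sq_sub_sq ha), zero_div, arcsin_zero, sub_zero]

theorem statement13 :
    ∃ C > 0, ∀ t : ℝ, 0 < t →
      (∫ r in (0 : ℝ)..(Real.exp t - 1), |K0 r t|) ≤ C := by
  refine ⟨π / 4, by positivity, fun t ht => ?_⟩
  have hE : 1 < exp t := one_lt_exp_iff.2 ht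
  have ha : |exp t - 1| < exp t + 1 := by rw [abs_of_pos (by linarith)]; linarith
  calc ∫ r in (0 : ℝ)..(exp t - 1), |K0 r t|
      ≤ ∫ r in (0 : ℝ)..(exp t - 1), 1 / √((exp t + 1) ^ 2 - r ^ 2) / 2 :=
        intervalIntegral_mono_of_nonneg (by linarith) (fun r _ => abs_nonneg _)
          ((intervalIntegrable_one_div_sqrt_sq_sub_sq ha).div_const 2)
          fun r hr => (abs_K0_le ht hr.1.le hr.2).trans_eq (by ring)
    _ = arcsin ((exp t - 1) / (exp t + 1)) / 2 := by
        rw [intervalIntegral.integral_div, integral_one_div_sqrt_sq_sub_sq ha]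
    _ ≤ π / 4 := by linarith [arcsin_le_pi_div_two ((exp t - 1) / (exp t + 1))]
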